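/- arXiv:1111.2477 — 2 statements merged into one kernel-verified Lean document; each statement's English description precedes it below -/
import Mathlib

section
/- Every (1,≤2)-identifying code of the king grid has density at least 1/3. -/
open Filter

/-- Closed neighbourhood of a vertex in the king grid: `v` together with all vertices
differing from `v` by at most `1` in each coordinate. -/
def kingN (v : ℤ × ℤ) : Set (ℤ × ℤ) := {u | |u.1 - v.1| ≤ 1 ∧ |u.2 - v.2| ≤ 1}

/-- Closed neighbourhood of a set of vertices. -/
def kingNS (X : Set (ℤ × ℤ)) : Set (ℤ × ℤ) := ⋃ v ∈ X, kingN v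

/-- `C ⊆ ℤ²` is a `(1, ≤ ℓ)`-identifying code in the king grid. -/
def IsIdCode (ℓ : ℕ) (C : Set (ℤ × ℤ)) : Prop :=
  ∀ X Y : Set (ℤ × ℤ), X.Finite → Y.Finite → X.ncard ≤ ℓ → Y.ncard ≤ ℓ → X ≠ Y →
    kingNS X ∩ C ≠ kingNS Y ∩ C

/-- The square `Q_n = {(x,y) : |x| ≤ n, |y| ≤ n}`. -/
noncomputable def Qn (n : ℕ) : Finset (ℤ × ℤ) := Finset.Icc (-(n : ℤ), -(n : ℤ)) ((n : ℤ), (n : ℤ))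

/-- The density of a code `C ⊆ ℤ²`. -/
noncomputable def density (C : Set (ℤ × ℤ)) : ℝ :=
  Filter.atTop.limsup fun n : ℕ =>
    ((C ∩ (Qn n : Set (ℤ × ℤ))).ncard : ℝ) / ((Qn n).card : ℝ)

/-- `n(X, C)`: the average number of codewords of `C` in the translates of `X`. -/
noncomputable def avgCount (X C : Set (ℤ × ℤ)) : ℝ :=
  Filter.atTop.limsup fun n : ℕ =>
    (∑ v ∈ Qn n, ((C ∩ ((fun u => v + u) '' X)).ncard : ℝ)) / ((Qn n).card : ℝ)

/-- The frame at `v`: the 12-element set `{v+(a,b) : a,b ∈ {0,1,2,3}, a ∈ {0,3} or b ∈ {0,3}}`. -/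
noncomputable def frame (v : ℤ × ℤ) : Finset (ℤ × ℤ) :=
  (((Finset.Icc (0 : ℤ) 3) ×ˢ (Finset.Icc (0 : ℤ) 3)).filter
      fun p => p.1 = 0 ∨ p.1 = 3 ∨ p.2 = 0 ∨ p.2 = 3).image fun p => v + p

/-- The number of codewords of `C` in the frame at `v`. -/
noncomputable def frameCount (C : Set (ℤ × ℤ)) (v : ℤ × ℤ) : ℕ :=
  (C ∩ (frame v : Set (ℤ × ℤ))).ncard

/-- The four corners of the frame at `v`. -/
def corners (v : ℤ × ℤ) : Finset (ℤ × ℤ) :=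
  {v + (0, 0), v + (3, 0), v + (0, 3), v + (3, 3)}

/-- The four sides of the frame at `v`. -/
def sides (v : ℤ × ℤ) : Finset (Finset (ℤ × ℤ)) :=
  { {v + (0, 0), v + (1, 0), v + (2, 0), v + (3, 0)},
    {v + (0, 3), v + (1, 3), v + (2, 3), v + (3, 3)},
    {v + (0, 0), v + (0, 1), v + (0, 2), v + (0, 3)},
    {v + (3, 0), v + (3, 1), v + (3, 2), v + (3, 3)} }

/-- Offsets at (frame-lattice) distance at most 2, i.e. the 2-ball of the origin. -/
noncomputable def ball2 : Finset (ℤ × ℤ) := Finset.Icc (-2, -2) (2, 2)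

/-- Offsets at (frame-lattice) distance exactly 1. -/
noncomputable def sphere1 : Finset (ℤ × ℤ) := (Finset.Icc (-1, -1) (1, 1)).erase (0, 0)

/-- Offsets at (frame-lattice) distance exactly 2. -/
noncomputable def sphere2 : Finset (ℤ × ℤ) := Finset.Icc (-2, -2) (2, 2) \ Finset.Icc (-1, -1) (1, 1)

/-- The number of offsets `d ∈ S` satisfying the property `P`. -/
noncomputable def countFrames (S : Finset (ℤ × ℤ)) (P : ℤ × ℤ → Prop) : ℕ :=
  {d | d ∈ S ∧ P d}.ncard

/-- The four offsets `(2,0), (−2,0), (0,2), (0,−2)`. -/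
def offsets4 : Finset (ℤ × ℤ) := {(2, 0), (-2, 0), (0, 2), (0, -2)}

/-- A 4-benefactor: a `6⁺`-frame one of whose four translates by `(±2,0), (0,±2)`
is a 4-frame. -/
def Benefactor4 (C : Set (ℤ × ℤ)) (v : ℤ × ℤ) : Prop :=
  6 ≤ frameCount C v ∧ ∃ d ∈ offsets4, frameCount C (v + d) = 4

/-- A 1-poor frame: a 5-frame having at most one 6-frame in its 2-ball. -/
def OnePoor (C : Set (ℤ × ℤ)) (v : ℤ × ℤ) : Prop :=
  frameCount C v = 5 ∧ countFrames ball2 (fun d => frameCount C (v + d) = 6) ≤ 1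

/-- A 2-poor frame: a 5-frame with no `6⁺`-frame at distance 1 and at most two 6-frames
at distance 2. -/
def TwoPoor (C : Set (ℤ × ℤ)) (v : ℤ × ℤ) : Prop :=
  frameCount C v = 5 ∧ (∀ d ∈ sphere1, frameCount C (v + d) < 6) ∧
    countFrames sphere2 (fun d => frameCount C (v + d) = 6) ≤ 2

/-- A 1-poor-benefactor: a 6-frame at distance 1 from some 1-poor frame which has at most
two 1-poor frames in its 2-ball, each of them at distance 1, has at least two `6⁺`-frames
at distance 2, and is not a 4-benefactor. -/
def OnePoorBenefactor (C : Set (ℤ × ℤ)) (w : ℤ × ℤ) : Prop :=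
  frameCount C w = 6 ∧ (∃ e ∈ sphere1, OnePoor C (w + e)) ∧
    countFrames ball2 (fun e => OnePoor C (w + e)) ≤ 2 ∧
    (∀ e ∈ ball2, OnePoor C (w + e) → e ∈ sphere1) ∧
    2 ≤ countFrames sphere2 (fun e => 6 ≤ frameCount C (w + e)) ∧
    ¬ Benefactor4 C w

/-!
Separating `{u}` from `{u, v}` for horizontally adjacent `u = (a + 2, b + 1)`, `v = (a + 1, b + 1)`
forces a codeword in `N[v] \ N[u]`, the vertical segment `{a} × [b, b + 2]`. Every column
therefore meets the code in at least one of every three consecutive cells, so `Q_n` contains at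
least `(2n + 1) ⌊(2n + 1) / 3⌋` codewords, and the ratio tends to `1/3` from below.
-/

lemma Filter.Tendsto.le_limsup_of_le {α β : Type*} [ConditionallyCompleteLinearOrder β]
    [TopologicalSpace β] [OrderTopology β] {l : Filter α} [l.NeBot] {f g : α → β} {b : β}
    (hg : Tendsto g l (nhds b)) (hgf : g ≤ᶠ[l] f) (hf : IsBoundedUnder (· ≤ ·) l f) :
    b ≤ limsup f l :=
  hg.limsup_eq ▸ limsup_le_limsup hgf hg.isBoundedUnder_ge.isCoboundedUnder_le hf

lemma kingNS_singleton (u : ℤ × ℤ) : kingNS {u} = kingN u := Set.biUnion_singleton u kingN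

lemma kingNS_pair (u v : ℤ × ℤ) : kingNS {u, v} = kingN u ∪ kingN v := by
  simp only [kingNS, Set.biUnion_insert, Set.biUnion_singleton]

lemma IsIdCode.exists_mem_kingN_diff {ℓ : ℕ} {C : Set (ℤ × ℤ)} (hC : IsIdCode ℓ C) (hℓ : 2 ≤ ℓ)
    {u v : ℤ × ℤ} (huv : u ≠ v) : ∃ c ∈ C, c ∈ kingN v ∧ c ∉ kingN u := by
  have hsep := hC {u} {u, v} (Set.finite_singleton u) (Set.toFinite _)
    (by rw [Set.ncard_singleton]; omega) (by rw [Set.ncard_pair huv]; exact hℓ)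
    (fun h => huv (Set.mem_singleton_iff.mp (h ▸ Set.mem_insert_of_mem u rfl)).symm)
  rw [kingNS_singleton, kingNS_pair] at hsep
  by_contra! h
  refine hsep ?_
  rw [Set.union_inter_distrib_right, eq_comm, Set.union_eq_left]
  exact fun c hc => ⟨h c hc.2 hc.1, hc.2⟩

lemma IsIdCode.exists_mem_column_segment {ℓ : ℕ} {C : Set (ℤ × ℤ)} (hC : IsIdCode ℓ C)
    (hℓ : 2 ≤ ℓ) (a b : ℤ) : ∃ c ∈ C, c.1 = a ∧ b ≤ c.2 ∧ c.2 ≤ b + 2 := by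
  obtain ⟨c, hcC, hcv, hcu⟩ :=
    hC.exists_mem_kingN_diff hℓ (u := (a + 2, b + 1)) (v := (a + 1, b + 1)) (by simp)
  simp only [kingN, Set.mem_ofPred_eq, abs_le, not_and_or, not_le] at hcv hcu
  exact ⟨c, hcC, by omega, by omega, by omega⟩

noncomputable def densityRatio (C : Set (ℤ × ℤ)) (n : ℕ) : ℝ :=
  ((C ∩ (Qn n : Set (ℤ × ℤ))).ncard : ℝ) / (Qn n).card

lemma Qn_eq_product (n : ℕ) : Qn n = Finset.Icc (-(n : ℤ)) n ×ˢ Finset.Icc (-(n : ℤ)) n := rfl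

lemma card_Icc_neg_self (n : ℕ) : (Finset.Icc (-(n : ℤ)) n).card = 2 * n + 1 := by
  rw [Int.card_Icc]
  omega

lemma card_Qn (n : ℕ) : (Qn n).card = (2 * n + 1) * (2 * n + 1) := by
  rw [Qn_eq_product, Finset.card_product, card_Icc_neg_self]

section ColumnSegments

variable {C : Set (ℤ × ℤ)} (hcol : ∀ a b : ℤ, ∃ c ∈ C, c.1 = a ∧ b ≤ c.2 ∧ c.2 ≤ b + 2)
include hcol

lemma le_ncard_inter_Qn (n : ℕ) :
    (2 * n + 1) * ((2 * n + 1) / 3) ≤ (C ∩ (Qn n : Set (ℤ × ℤ))).ncard := by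
  choose f hfC hf1 hf2 hf3 using hcol
  set K := (2 * n + 1) / 3
  set T := Finset.Icc (-(n : ℤ)) n ×ˢ Finset.range K
  -- the `k`-th segment of column `a` is `{a} × [-n + 3k, -n + 3k + 2]`
  let g : ℤ × ℕ → ℤ × ℤ := fun p => f p.1 (-n + 3 * p.2)
  have hg_mem : ∀ p ∈ (T : Set (ℤ × ℕ)), g p ∈ C ∩ (Qn n : Set (ℤ × ℤ)) := by
    rintro ⟨a, k⟩ hp
    simp only [T, Finset.coe_product, Set.mem_prod, Finset.coe_Icc, Finset.coe_range,
      Set.mem_Icc, Set.mem_Iio] at hp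
    have := hf1 a (-n + 3 * k); have := hf2 a (-n + 3 * k); have := hf3 a (-n + 3 * k)
    refine ⟨hfC _ _, ?_⟩
    simp only [Finset.mem_coe, Qn_eq_product, Finset.mem_product, Finset.mem_Icc, g]
    omega
  have hg_inj : Set.InjOn g T := by
    rintro ⟨a, k⟩ - ⟨a', k'⟩ - hgg
    have := hf1 a (-n + 3 * k); have := hf2 a (-n + 3 * k); have := hf3 a (-n + 3 * k)
    have := hf1 a' (-n + 3 * k'); have := hf2 a' (-n + 3 * k'); have := hf3 a' (-n + 3 * k')
    simp only [g, Prod.ext_iff] at hgg ⊢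
    omega
  calc (2 * n + 1) * K = (T : Set (ℤ × ℕ)).ncard := by
        rw [Set.ncard_coe_finset, Finset.card_product, card_Icc_neg_self, Finset.card_range]
    _ ≤ _ := Set.ncard_le_ncard_of_injOn g hg_mem hg_inj (Set.toFinite _)

lemma one_third_sub_le_densityRatio (n : ℕ) :
    1 / 3 - 1 / ((n : ℝ) + 1) ≤ densityRatio C n := by
  have hcount := le_ncard_inter_Qn hcol n
  set c := (C ∩ (Qn n : Set (ℤ × ℤ))).ncard
  have hsq : (2 * n + 1) * (2 * n + 1) ≤ 3 * c + 2 * (2 * n + 1) := by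
    have : 2 * n + 1 ≤ 3 * ((2 * n + 1) / 3) + 2 := by omega
    nlinarith
  have hsq' : (2 * (n : ℝ) + 1) * (2 * n + 1) ≤ 3 * c + 2 * (2 * n + 1) := by exact_mod_cast hsq
  rw [densityRatio, card_Qn, sub_le_iff_le_add, div_add_div _ _ (by positivity) (by positivity),
    div_le_div_iff₀ (by positivity) (by positivity)]
  push_cast
  nlinarith

end ColumnSegments

lemma densityRatio_le_one (C : Set (ℤ × ℤ)) (n : ℕ) : densityRatio C n ≤ 1 := by
  refine div_le_one_of_le₀ ?_ (Nat.cast_nonneg _)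
  rw [← Set.ncard_coe_finset (Qn n)]
  exact_mod_cast Set.ncard_le_ncard Set.inter_subset_right (Finset.finite_toSet _)

/-- Every `(1, ≤ 2)`-identifying code of the king grid has density at least `1/3`. -/
theorem density_ge_1_3 (C : Set (ℤ × ℤ)) (hC : IsIdCode 2 C) :
    (1 : ℝ) / 3 ≤ density C := by
  have hcol := hC.exists_mem_column_segment le_rfl
  have hlim : Tendsto (fun n : ℕ => 1 / 3 - 1 / ((n : ℝ) + 1)) atTop (nhds (1 / 3)) := by
    simpa using tendsto_one_div_add_atTop_nhds_zero_nat.const_sub (1 / 3 : ℝ)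
  exact hlim.le_limsup_of_le (.of_forall (one_third_sub_le_densityRatio hcol))
    (isBoundedUnder_of ⟨1, densityRatio_le_one C⟩)
end

section
/- If C is a (1,≤2)-identifying code of the king grid, then every frame contains at least four elements of C, i.e., every frame is a 4^+-frame. -/
open Filter

/-! For consecutive cells `q, p` of the inner `2 × 2` square of a frame, the code must separate
`{p, q}` from `{p}`, which takes a codeword in `N[q] \ N[p]`. These four
differences are disjoint three-cell pieces of the four sides of the frame, arranged as a pinwheel,
so the frame contains four codewords. -/

open Function

theorem IsIdCode.exists_mem_kingN_diff_s5 {ℓ : ℕ} {C : Set (ℤ × ℤ)} (hC : IsIdCode ℓ C)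
    (hℓ : 2 ≤ ℓ) {p q : ℤ × ℤ} (hpq : p ≠ q) : (C ∩ (kingN q \ kingN p)).Nonempty := by
  have hne : ({p, q} : Set (ℤ × ℤ)) ≠ {p} := fun h =>
    hpq (Set.mem_singleton_iff.mp (h ▸ Set.mem_insert_of_mem p rfl)).symm
  have hsep := hC {p, q} {p} (Set.toFinite _) (Set.toFinite _)
    ((Set.ncard_insert_le _ _).trans (by simpa using hℓ)) (by simp; omega) hne
  by_contra hempty
  refine hsep (Set.ext fun z => ?_)
  simp only [kingNS, Set.biUnion_insert, Set.biUnion_singleton, Set.mem_inter_iff,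
    Set.mem_union]
  refine ⟨fun ⟨hz, hzC⟩ => ⟨hz.elim id fun hzq => ?_, hzC⟩, fun ⟨hz, hzC⟩ => ⟨.inl hz, hzC⟩⟩
  exact by_contra fun hzp => hempty ⟨z, hzC, hzq, hzp⟩

theorem le_ncard_inter_of_pairwise_disjoint {ι α : Type*} [Fintype ι] {S : ι → Set α}
    {C T : Set α} (hT : T.Finite) (hdisj : Pairwise (Disjoint on S)) (hST : ∀ i, S i ⊆ T)
    (hC : ∀ i, (C ∩ S i).Nonempty) : Fintype.card ι ≤ (C ∩ T).ncard := by
  choose z hzC hzS using hC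
  have hinj : Injective fun i => (⟨z i, hzC i, hST i (hzS i)⟩ : ↥(C ∩ T)) :=
    fun i j hij => by_contra fun hne => Set.disjoint_left.mp (hdisj hne) (hzS i)
      (by rw [show z i = z j from congrArg Subtype.val hij]; exact hzS j)
  have : Finite ↥(C ∩ T) := (hT.subset Set.inter_subset_right).to_subtype
  rw [← Nat.card_eq_fintype_card, ← Nat.card_coe_set_eq]
  exact Nat.card_le_card_of_injective _ hinj

theorem mem_frame_iff {u v : ℤ × ℤ} : u ∈ frame v ↔
    0 ≤ u.1 - v.1 ∧ u.1 - v.1 ≤ 3 ∧ 0 ≤ u.2 - v.2 ∧ u.2 - v.2 ≤ 3 ∧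
      (u.1 - v.1 = 0 ∨ u.1 - v.1 = 3 ∨ u.2 - v.2 = 0 ∨ u.2 - v.2 = 3) := by
  simp only [frame, Finset.mem_image, Finset.mem_filter, Finset.mem_product, Finset.mem_Icc]
  constructor
  · rintro ⟨w, hw, rfl⟩
    simp only [Prod.fst_add, Prod.snd_add, add_sub_cancel_left]
    omega
  · intro h
    exact ⟨u - v, by simp only [Prod.fst_sub, Prod.snd_sub]; omega, by simp⟩

/-- The inner `2 × 2` square of the frame at `v`, in cyclic order. -/
def innerCell (v : ℤ × ℤ) : Fin 4 → ℤ × ℤ :=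
  ![v + (1, 1), v + (2, 1), v + (2, 2), v + (1, 2)]

theorem kingN_innerCell_diff_subset_frame (v : ℤ × ℤ) (i : Fin 4) :
    kingN (innerCell v i) \ kingN (innerCell v (i + 1)) ⊆ frame v := by
  intro u hu
  rw [Finset.mem_coe, mem_frame_iff]
  fin_cases i <;> simp [innerCell, kingN, abs_le] at hu <;> omega

theorem pairwise_disjoint_kingN_innerCell_diff (v : ℤ × ℤ) :
    Pairwise (Disjoint on fun i => kingN (innerCell v i) \ kingN (innerCell v (i + 1))) := by
  intro i j hij
  rw [onFun, Set.disjoint_left]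
  intro u hi hj
  fin_cases i <;> fin_cases j <;> simp [innerCell, kingN, abs_le] at hi hj hij <;> omega

theorem innerCell_succ_ne (v : ℤ × ℤ) (i : Fin 4) : innerCell v (i + 1) ≠ innerCell v i := by
  fin_cases i <;> simp [innerCell]

/-- Every frame contains at least four codewords of a `(1, ≤ 2)`-identifying code. -/
theorem frame_is_four_plus (C : Set (ℤ × ℤ)) (hC : IsIdCode 2 C) (v : ℤ × ℤ) :
    4 ≤ frameCount C v := by
  simpa [frameCount] using le_ncard_inter_of_pairwise_disjoint (frame v).finite_toSet
    (pairwise_disjoint_kingN_innerCell_diff v) (kingN_innerCell_diff_subset_frame v)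
    fun i => hC.exists_mem_kingN_diff_s5 le_rfl (innerCell_succ_ne v i)
end
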